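/- arXiv:2602.15076 — 5 statements merged into one kernel-verified Lean document; each statement's English description precedes it below -/
import Mathlib

section
/- Suppose X is a set, f, c : X → ℝ, b ∈ ℝ, λ* ≥ 0 is an optimal dual variable satisfying strong duality (ν(0) = sup_x (f(x) - λ*(c(x)-b)) with ν(γ) := sup{f(x) : c(x) ≤ b - γ}), and U > λ*. If x̃ ∈ X satisfies ν(0) - f(x̃) + U·max(c(x̃) - b, 0) ≤ B, then max(c(x̃) - b, 0) ≤ B / (U - λ*). -/
/-- Constraint-violation bound for approximate Lagrangian solutions: if strong duality
holds at multiplier `lam ≥ 0` with `U > lam`, and `xt` has Lagrangian suboptimality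
`ν 0 - f xt + U * (c xt - b)₊ ≤ B`, then `(c xt - b)₊ ≤ B / (U - lam)`. -/
theorem stmt_1 {X : Type*} [Nonempty X] (f c : X → ℝ) (b lam U B : ℝ)
    (hlam : 0 ≤ lam) (hU : lam < U)
    (hbdd : BddAbove (Set.range fun x => f x - lam * (c x - b)))
    (ν : ℝ → ℝ)
    (hν : ∀ γ, ν γ = sSup (f '' {x | c x ≤ b - γ}))
    (hsd : ν 0 = ⨆ x, (f x - lam * (c x - b)))
    (xt : X)
    (hB : ν 0 - f xt + U * max (c xt - b) 0 ≤ B) :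
    max (c xt - b) 0 ≤ B / (U - lam) := by
  set m := max (c xt - b) 0 with hm
  have h1 : f xt - lam * (c xt - b) ≤ ν 0 := by
    rw [hsd]; exact le_ciSup hbdd xt
  have h2 : lam * (c xt - b) ≤ lam * m :=
    mul_le_mul_of_nonneg_left (le_max_left _ _) hlam
  have key : (U - lam) * m ≤ B := by nlinarith
  rw [le_div_iff₀ (by linarith)]
  linarith [key]
end

section
/- Let p ∈ Δ^S be a probability vector on S states, v ∈ ℝ^S a nonnegative vector with ‖v‖_∞ ≤ H, n a positive integer, and δ' ∈ (0,1). Define f(p, v, n) = ⟨p, v⟩ + max{ (20/3)·√(𝕍(p,v)·log(1/δ')/n), (400/9)·H·log(1/δ')/n }, where 𝕍(p,v) = ⟨p, v²⟩ - ⟨p, v⟩². Then f(p, v, n) is non-decreasing in each entry of v (on the domain 0 ≤ v ≤ H). -/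
lemma var_nonneg' {S : Type*} [Fintype S] (p v : S → ℝ)
    (hp : ∀ s, 0 ≤ p s) (hp1 : ∑ s, p s = 1) :
    0 ≤ (∑ s, p s * (v s) ^ 2) - (∑ s, p s * v s) ^ 2 := by
  set m := ∑ s, p s * v s with hm
  have key : ∑ s, p s * (v s - m) ^ 2
      = (∑ s, p s * (v s) ^ 2) - m ^ 2 := by
    have : ∀ s, p s * (v s - m) ^ 2
        = p s * (v s) ^ 2 - 2 * m * (p s * v s) + m ^ 2 * p s := by
      intro s; ring
    simp only [this, Finset.sum_add_distrib, Finset.sum_sub_distrib,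
      ← Finset.mul_sum, hp1]
    ring
  have h0 : 0 ≤ ∑ s, p s * (v s - m) ^ 2 :=
    Finset.sum_nonneg fun s _ => mul_nonneg (hp s) (sq_nonneg _)
  linarith [key ▸ h0]

/-- Monotonicity of the Bernstein-style upper-confidence value
`f(p, v, n) = ⟨p, v⟩ + max{(20/3)·√(𝕍(p,v)·log(1/δ')/n), (400/9)·H·log(1/δ')/n}`
in each coordinate of `v`, for `v` ranging over `[0, H]^S`. -/
theorem stmt_5 {S : Type*} [Fintype S] (p : S → ℝ) (H : ℝ) (n : ℕ) (δ' : ℝ)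
    (hp : ∀ s, 0 ≤ p s) (hp1 : ∑ s, p s = 1)
    (hH : 0 < H) (hn : 0 < n) (hδ : 0 < δ') (hδ1 : δ' < 1)
    (v w : S → ℝ) (s₀ : S)
    (hv : ∀ s, 0 ≤ v s ∧ v s ≤ H) (hw : ∀ s, 0 ≤ w s ∧ w s ≤ H)
    (hle : v s₀ ≤ w s₀) (heq : ∀ s, s ≠ s₀ → v s = w s) :
    (∑ s, p s * v s) +
      max ((20 / 3) * Real.sqrt (((∑ s, p s * (v s) ^ 2) - (∑ s, p s * v s) ^ 2) *
          Real.log (1 / δ') / n))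
        ((400 / 9) * H * Real.log (1 / δ') / n) ≤
    (∑ s, p s * w s) +
      max ((20 / 3) * Real.sqrt (((∑ s, p s * (w s) ^ 2) - (∑ s, p s * w s) ^ 2) *
          Real.log (1 / δ') / n))
        ((400 / 9) * H * Real.log (1 / δ') / n) := by
  set L := Real.log (1 / δ') with hLdef
  have hL : 0 < L := Real.log_pos (by rw [lt_div_iff₀ hδ]; linarith)
  have hnR : (0 : ℝ) < n := by exact_mod_cast hn
  set mv := ∑ s, p s * v s with hmv
  set mw := ∑ s, p s * w s with hmw
  set Vv := (∑ s, p s * (v s) ^ 2) - mv ^ 2 with hVv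
  set Vw := (∑ s, p s * (w s) ^ 2) - mw ^ 2 with hVw
  have hVv0 : 0 ≤ Vv := var_nonneg' p v hp hp1
  have hVw0 : 0 ≤ Vw := var_nonneg' p w hp hp1
  set Δ := p s₀ * (w s₀ - v s₀) with hΔ
  have hΔ0 : 0 ≤ Δ := mul_nonneg (hp s₀) (by linarith)
  -- mean difference
  have hmean : mw - mv = Δ := by
    rw [hmv, hmw, ← Finset.sum_sub_distrib]
    rw [Finset.sum_eq_single s₀]
    · ring
    · intro s _ hs; rw [heq s hs]; ring
    · intro h; exact absurd (Finset.mem_univ s₀) h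
  -- second moment difference
  have hsq : (∑ s, p s * (w s) ^ 2) - (∑ s, p s * (v s) ^ 2)
      = p s₀ * ((w s₀) ^ 2 - (v s₀) ^ 2) := by
    rw [← Finset.sum_sub_distrib]
    rw [Finset.sum_eq_single s₀]
    · ring
    · intro s _ hs; rw [heq s hs]; ring
    · intro h; exact absurd (Finset.mem_univ s₀) h
  -- variance difference
  have hVdiff : Vv - Vw = Δ * (mv + mw - v s₀ - w s₀) := by
    have h1 : mw ^ 2 - mv ^ 2 = Δ * (mv + mw) := by rw [← hmean]; ring
    have h2 : p s₀ * ((w s₀) ^ 2 - (v s₀) ^ 2) = Δ * (w s₀ + v s₀) := by ring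
    rw [hVv, hVw]; nlinarith [hsq]
  -- bounds on means and coordinates
  have hmvH : mv ≤ H := by
    calc mv ≤ ∑ s, p s * H :=
        Finset.sum_le_sum fun s _ => mul_le_mul_of_nonneg_left (hv s).2 (hp s)
    _ = H := by rw [← Finset.sum_mul, hp1, one_mul]
  have hmwH : mw ≤ H := by
    calc mw ≤ ∑ s, p s * H :=
        Finset.sum_le_sum fun s _ => mul_le_mul_of_nonneg_left (hw s).2 (hp s)
    _ = H := by rw [← Finset.sum_mul, hp1, one_mul]
  have hσ : mv + mw - v s₀ - w s₀ ≤ 2 * H := by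
    have := (hv s₀).1; have := (hw s₀).1; linarith
  clear_value L mv mw Vv Vw Δ
  set X := (20 / 3) * Real.sqrt (Vv * L / n) with hX
  set Y := (20 / 3) * Real.sqrt (Vw * L / n) with hY
  set K := (400 / 9) * H * L / n with hK
  have hK0 : 0 < K := by
    apply div_pos _ hnR; positivity
  have hX2 : X ^ 2 = (400 / 9) * (Vv * L / n) := by
    rw [hX, mul_pow,
      Real.sq_sqrt (div_nonneg (mul_nonneg hVv0 hL.le) hnR.le)]; ring
  have hY2 : Y ^ 2 = (400 / 9) * (Vw * L / n) := by
    rw [hY, mul_pow,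
      Real.sq_sqrt (div_nonneg (mul_nonneg hVw0 hL.le) hnR.le)]; ring
  have hX0 : 0 ≤ X := mul_nonneg (by norm_num) (Real.sqrt_nonneg _)
  have hY0 : 0 ≤ Y := mul_nonneg (by norm_num) (Real.sqrt_nonneg _)
  clear_value X Y K
  -- the key inequality on the max terms
  have key : max X K ≤ max Y K + Δ := by
    rcases le_or_gt X K with h | h
    · calc max X K = K := max_eq_right h
      _ ≤ max Y K := le_max_right _ _
      _ ≤ max Y K + Δ := by linarith
    · rcases le_or_gt X (max Y K) with h2 | h2
      · have : max X K = X := max_eq_left h.le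
        rw [this]; linarith
      · have hmXK : max X K = X := max_eq_left h.le
        rw [hmXK]
        set y := max Y K with hy
        have hyK : K ≤ y := le_max_right _ _
        have hyY : Y ≤ y := le_max_left _ _
        -- X² - y² ≤ X² - Y² = (400/9)(Vv - Vw)L/n ≤ 2KΔ
        have hXY2 : X ^ 2 - Y ^ 2 ≤ 2 * K * Δ := by
          have hd : X ^ 2 - Y ^ 2 = (400 / 9) * ((Vv - Vw) * L / n) := by
            rw [hX2, hY2]; ring
          have hVle : Vv - Vw ≤ Δ * (2 * H) := by
            rw [hVdiff]
            exact mul_le_mul_of_nonneg_left hσ hΔ0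
          have hLn : (0:ℝ) < L / n := div_pos hL hnR
          have hmul := mul_le_mul_of_nonneg_right hVle hLn.le
          calc X ^ 2 - Y ^ 2 = (400 / 9) * ((Vv - Vw) * (L / n)) := by
                rw [hd]; ring
            _ ≤ (400 / 9) * (Δ * (2 * H) * (L / n)) :=
                mul_le_mul_of_nonneg_left hmul (by norm_num)
            _ = 2 * ((400 / 9) * H * L / n) * Δ := by ring
            _ = 2 * K * Δ := by rw [hK]
        have hy2 : Y ^ 2 ≤ y ^ 2 := pow_le_pow_left₀ hY0 hyY 2
        have hsum : 2 * K ≤ X + y := by linarith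
        have hpos : 0 < X + y := by linarith
        have h2 : (X - y) * (X + y) ≤ Δ * (X + y) := by
          have h3 : 2 * K * Δ ≤ (X + y) * Δ := mul_le_mul_of_nonneg_right hsum hΔ0
          calc (X - y) * (X + y) = X ^ 2 - y ^ 2 := by ring
            _ ≤ X ^ 2 - Y ^ 2 := by linarith
            _ ≤ 2 * K * Δ := hXY2
            _ ≤ (X + y) * Δ := h3
            _ = Δ * (X + y) := by ring
        have h4 : X - y ≤ Δ := le_of_mul_le_mul_right h2 hpos
        linarith
  linarith [key, hmean]
end

section
/- Let π* maximize f over {π : g(π) ≤ b} and π_c minimize g, with ζ := b - g(π_c) > 0. For Δ ∈ (0, ζ), let π^Δ = (1 - Δ/ζ)·π* + (Δ/ζ)·π_c be the mixture policy (whose value functions are the corresponding convex combinations: f(π^Δ) = (1-Δ/ζ)f(π*) + (Δ/ζ)f(π_c), similarly for g). Then g(π^Δ) ≤ b - Δ, and if 0 ≤ f ≤ H, then f(π*) - sup{f(π) : g(π) ≤ b - Δ} ≤ (Δ/ζ)·H. -/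
/-- Cost of tightening the constraint: mixing the constrained-optimal `pstar` with
the min-cost policy `pc` with weight `Δ/ζ` yields a policy feasible at level `b - Δ`,
and the optimal value at level `b - Δ` is within `(Δ/ζ)·H` of `f pstar`. -/
theorem stmt_10 {P : Type*} (f g : P → ℝ) (b ζ Δ H : ℝ)
    (pstar pc pΔ : P)
    (hf : ∀ p, 0 ≤ f p ∧ f p ≤ H)
    (hfeas : g pstar ≤ b)
    (hopt : ∀ p, g p ≤ b → f p ≤ f pstar)
    (hpc : ∀ p, g pc ≤ g p)
    (hζdef : ζ = b - g pc) (hζ : 0 < ζ)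
    (hΔ : 0 < Δ) (hΔζ : Δ < ζ)
    (hmixf : f pΔ = (1 - Δ / ζ) * f pstar + (Δ / ζ) * f pc)
    (hmixg : g pΔ = (1 - Δ / ζ) * g pstar + (Δ / ζ) * g pc) :
    g pΔ ≤ b - Δ ∧
      f pstar - sSup (f '' {p | g p ≤ b - Δ}) ≤ (Δ / ζ) * H := by
  have ht0 : 0 < Δ / ζ := div_pos hΔ hζ
  have ht1 : Δ / ζ < 1 := (div_lt_one hζ).mpr hΔζ
  have hgc : g pc = b - ζ := by linarith [hζdef]
  have htζ : (Δ / ζ) * ζ = Δ := div_mul_cancel₀ Δ hζ.ne'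
  have hfeasΔ : g pΔ ≤ b - Δ := by
    rw [hmixg, hgc]
    nlinarith [hfeas]
  refine ⟨hfeasΔ, ?_⟩
  have hne : (f '' {p | g p ≤ b - Δ}).Nonempty := ⟨f pΔ, ⟨pΔ, hfeasΔ, rfl⟩⟩
  have hbdd : BddAbove (f '' {p | g p ≤ b - Δ}) := by
    refine ⟨H, ?_⟩
    rintro x ⟨p, -, rfl⟩
    exact (hf p).2
  have hle : f pΔ ≤ sSup (f '' {p | g p ≤ b - Δ}) :=
    le_csSup hbdd ⟨pΔ, hfeasΔ, rfl⟩
  have h1 : f pstar - f pΔ ≤ (Δ / ζ) * H := by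
    rw [hmixf]
    nlinarith [(hf pc).1, (hf pstar).2]
  linarith
end

section
/- Suppose for each t ∈ [T], π_t maximizes π ↦ F(π) - λ_t·G(π) over Π, where λ_t ≥ 0, and suppose π° ∈ Π satisfies G(π°) ≤ b'. If F and G are linear under mixtures and π̄ = (1/T)Σ_t π_t, then F(π°) - F(π̄) ≤ (1/T)·Σ_{t=1}^T λ_t·(b' - G(π_t)). -/
open Finset

lemma sub_le_mul_sub_of_lagrangian_le {P : Type*} {F G : P → ℝ} {b lam : ℝ} {p p0 : P}
    (hlam : 0 ≤ lam) (hmax : F p0 - lam * G p0 ≤ F p - lam * G p) (hfeas : G p0 ≤ b) :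
    F p0 - F p ≤ lam * (b - G p) := by
  nlinarith [mul_le_mul_of_nonneg_left hfeas hlam]

lemma sub_mean_le_mean_of_forall_sub_le {ι : Type*} [Fintype ι] [Nonempty ι] {c : ℝ}
    {f g : ι → ℝ} (h : ∀ i, c - f i ≤ g i) :
    c - (Fintype.card ι : ℝ)⁻¹ * ∑ i, f i ≤ (Fintype.card ι : ℝ)⁻¹ * ∑ i, g i := by
  have hcard : (Fintype.card ι : ℝ) ≠ 0 := Nat.cast_ne_zero.mpr Fintype.card_ne_zero
  calc c - (Fintype.card ι : ℝ)⁻¹ * ∑ i, f i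
      = (Fintype.card ι : ℝ)⁻¹ * ∑ i, (c - f i) := by
        rw [sum_sub_distrib, sum_const, card_univ, nsmul_eq_mul, mul_sub,
          inv_mul_cancel_left₀ hcard]
    _ ≤ (Fintype.card ι : ℝ)⁻¹ * ∑ i, g i := by
        gcongr with i
        exact h i

theorem stmt_11_general {P : Type*} (F G : P → ℝ) (b' : ℝ) (T : ℕ) (hT : 1 ≤ T)
    (lam : Fin T → ℝ) (pt : Fin T → P) (p0 pbar : P)
    (hlam : ∀ t, 0 ≤ lam t)
    (hmax : ∀ t, ∀ p : P, F p - lam t * G p ≤ F (pt t) - lam t * G (pt t))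
    (hfeas : G p0 ≤ b')
    (hmixF : F pbar = (1 / (T : ℝ)) * ∑ t, F (pt t)) :
    F p0 - F pbar ≤ (1 / (T : ℝ)) * ∑ t, lam t * (b' - G (pt t)) := by
  have : Nonempty (Fin T) := ⟨⟨0, hT⟩⟩
  have hstep (t : Fin T) : F p0 - F (pt t) ≤ lam t * (b' - G (pt t)) :=
    sub_le_mul_sub_of_lagrangian_le (hlam t) (hmax t p0) hfeas
  simpa only [Fintype.card_fin, one_div, hmixF] using sub_mean_le_mean_of_forall_sub_le hstep

/-- Optimization error of the averaged primal iterates: if each `pt t` maximizes the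
Lagrangian `F - λ_t·G` and `p0` is feasible (`G p0 ≤ b'`), then the average policy
`pbar` satisfies `F p0 - F pbar ≤ (1/T)·Σ_t λ_t·(b' - G (pt t))`. -/
theorem stmt_11 {P : Type*} (F G : P → ℝ) (b' : ℝ) (T : ℕ) (hT : 1 ≤ T)
    (lam : Fin T → ℝ) (pt : Fin T → P) (p0 pbar : P)
    (hlam : ∀ t, 0 ≤ lam t)
    (hmax : ∀ t, ∀ p : P, F p - lam t * G p ≤ F (pt t) - lam t * G (pt t))
    (hfeas : G p0 ≤ b')
    (hmixF : F pbar = (1 / (T : ℝ)) * ∑ t, F (pt t))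
    (hmixG : G pbar = (1 / (T : ℝ)) * ∑ t, G (pt t)) :
    F p0 - F pbar ≤ (1 / (T : ℝ)) * ∑ t, lam t * (b' - G (pt t)) :=
  stmt_11_general F G b' T hT lam pt p0 pbar hlam hmax hfeas hmixF
end

section
/- Let π̂* be an optimal solution of max{F(π) : G(π) ≤ b'} and, for each t ∈ [T], let π_t maximize π ↦ F(π) - λ_t·(G(π) - b') with λ_t ≥ 0. Let π̄ = (1/T)Σ_t π_t (values mix linearly). Then for every λ ≥ 0: F(π̂*) - F(π̄) + λ·(G(π̄) - b') ≤ (1/T)·Σ_{t=1}^T (λ_t - λ)·(b' - G(π_t)). -/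
/-- Lagrangian regret decomposition for the averaged iterates: if `phat` is optimal
for `max {F p : G p ≤ b'}` and each `pt t` maximizes `F - λ_t·(G - b')`, then for
every `λ ≥ 0`,
`F phat - F pbar + λ·(G pbar - b') ≤ (1/T)·Σ_t (λ_t - λ)·(b' - G (pt t))`. -/
theorem stmt_12 {P : Type*} (F G : P → ℝ) (b' : ℝ) (T : ℕ) (hT : 1 ≤ T)
    (lam : Fin T → ℝ) (pt : Fin T → P) (phat pbar : P)
    (hlam : ∀ t, 0 ≤ lam t)
    (hfeas : G phat ≤ b')
    (hopt : ∀ p, G p ≤ b' → F p ≤ F phat)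
    (hmax : ∀ t, ∀ p : P,
      F p - lam t * (G p - b') ≤ F (pt t) - lam t * (G (pt t) - b'))
    (hmixF : F pbar = (1 / (T : ℝ)) * ∑ t, F (pt t))
    (hmixG : G pbar = (1 / (T : ℝ)) * ∑ t, G (pt t)) :
    ∀ l : ℝ, 0 ≤ l →
      F phat - F pbar + l * (G pbar - b') ≤
        (1 / (T : ℝ)) * ∑ t, (lam t - l) * (b' - G (pt t)) := by
  intro l hl
  have hTpos : (0:ℝ) < T := by exact_mod_cast hT
  have key : ∀ t, F phat - F (pt t) + l * (G (pt t) - b') ≤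
      (lam t - l) * (b' - G (pt t)) := by
    intro t
    have h1 := hmax t phat
    have h2 : lam t * (G phat - b') ≤ 0 :=
      mul_nonpos_of_nonneg_of_nonpos (hlam t) (by linarith)
    nlinarith
  have hsum : ∑ t, (F phat - F (pt t) + l * (G (pt t) - b')) ≤
      ∑ t, (lam t - l) * (b' - G (pt t)) := Finset.sum_le_sum (fun t _ => key t)
  have hmul := mul_le_mul_of_nonneg_left hsum (le_of_lt (one_div_pos.mpr hTpos))
  calc F phat - F pbar + l * (G pbar - b')
      = (1 / (T:ℝ)) * ∑ t, (F phat - F (pt t) + l * (G (pt t) - b')) := by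
        have hne : (T:ℝ) ≠ 0 := ne_of_gt hTpos
        rw [hmixF, hmixG]
        rw [Finset.sum_add_distrib, Finset.sum_sub_distrib, Finset.sum_const,
          Finset.card_univ, Fintype.card_fin, ← Finset.mul_sum,
          Finset.sum_sub_distrib, Finset.sum_const, Finset.card_univ,
          Fintype.card_fin]
        field_simp
        ring
    _ ≤ _ := hmul
end
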